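/- arXiv:2401.02388 — 4 statements merged into one kernel-verified Lean document; each statement's English description precedes it below -/
import Mathlib

section
/- Let $\{h_i\}_{i=1}^\infty$ be a sequence of nonnegative reals such that $\sum_{i=1}^\infty e^{-\beta h_i} < +\infty$ for all $\beta > 0$. Then the sequence $\{h_i^2\}$ satisfies the stronger condition $\lim_{\beta \to 0^+} \left[\sum_{i=1}^\infty e^{-\beta h_i^2}\right]^{\beta} = 1$. -/
private lemma gibbs_key (β γ x : ℝ) (hβ : 0 < β) (hγ : 0 < γ) (hγ1 : γ ≤ 1)
    (hx : 0 ≤ x) : -β * x ^ 2 ≤ γ / β + -γ * x := by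
  rcases le_or_gt x (1 / β) with hc | hc
  · have h1 : γ * x ≤ γ / β := by
      rw [div_eq_mul_inv]
      have := (div_eq_mul_inv (1:ℝ) β) ▸ hc
      nlinarith
    nlinarith [mul_nonneg hβ.le (sq_nonneg x)]
  · have h1 : 1 < β * x := by
      rw [div_lt_iff₀ hβ] at hc; linarith [hc]
    have h2 : x ≤ β * x ^ 2 := by nlinarith
    have h3 : γ * x ≤ x := by nlinarith
    have h4 : 0 < γ / β := div_pos hγ hβ
    linarith

/-- If a nonnegative sequence `h` satisfies the Gibbs condition
`∑ exp (-β h i) < ∞` for all `β > 0`, then the squared sequence `h i ^ 2`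
satisfies the strong Gibbs condition `(∑ exp (-β (h i)^2))^β → 1` as `β → 0⁺`. -/
theorem squared_sequence_strong_gibbs (h : ℕ → ℝ) (hnn : ∀ i, 0 ≤ h i)
    (hsum : ∀ β : ℝ, 0 < β → Summable fun i => Real.exp (-β * h i)) :
    Filter.Tendsto (fun β : ℝ => (∑' i, Real.exp (-β * (h i) ^ 2)) ^ β)
      (nhdsWithin 0 (Set.Ioi 0)) (nhds 1) := by
  -- summability of the squared sequence
  have hS : ∀ β : ℝ, 0 < β → Summable fun i => Real.exp (-β * h i ^ 2) := by
    intro β hβ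
    refine Summable.of_nonneg_of_le (fun i => (Real.exp_pos _).le) (fun i => ?_)
      ((hsum 1 one_pos).mul_left (Real.exp (1 / β)))
    rw [← Real.exp_add]
    exact Real.exp_le_exp.2 (gibbs_key β 1 (h i) hβ one_pos le_rfl (hnn i))
  have hpos : ∀ β : ℝ, 0 < β → 0 < ∑' i, Real.exp (-β * h i ^ 2) := by
    intro β hβ
    exact Summable.tsum_pos (hS β hβ) (fun i => (Real.exp_pos _).le) 0 (Real.exp_pos _)
  -- main limit: β * log S β → 0
  have hmain : Filter.Tendsto (fun β : ℝ => β * Real.log (∑' i, Real.exp (-β * h i ^ 2)))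
      (nhdsWithin 0 (Set.Ioi 0)) (nhds 0) := by
    rw [Metric.tendsto_nhdsWithin_nhds]
    intro ε hε
    set γ : ℝ := min (ε / 2) 1 with hγdef
    have hγpos : 0 < γ := lt_min (by linarith) one_pos
    have hγ1 : γ ≤ 1 := min_le_right _ _
    have hγε : γ ≤ ε / 2 := min_le_left _ _
    set T : ℝ := ∑' i, Real.exp (-γ * h i) with hTdef
    have hTpos : 0 < T :=
      Summable.tsum_pos (hsum γ hγpos) (fun i => (Real.exp_pos _).le) 0 (Real.exp_pos _)
    set L : ℝ := |Real.log T| with hLdef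
    have hL0 : 0 ≤ L := abs_nonneg _
    refine ⟨min 1 (min (ε / (2 * (L + 1))) (ε / ((h 0) ^ 2 + 1))), ?_, ?_⟩
    · refine lt_min one_pos (lt_min ?_ ?_)
      · positivity
      · positivity
    · intro β hβ hd
      have hβ0 : 0 < β := hβ
      rw [Real.dist_eq, sub_zero] at hd
      rw [abs_of_pos hβ0] at hd
      have hβ1 : β < 1 := lt_of_lt_of_le hd (min_le_left _ _)
      have hβ2 : β < ε / (2 * (L + 1)) :=
        lt_of_lt_of_le hd (le_trans (min_le_right _ _) (min_le_left _ _))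
      have hβ3 : β < ε / ((h 0) ^ 2 + 1) :=
        lt_of_lt_of_le hd (le_trans (min_le_right _ _) (min_le_right _ _))
      rw [Real.dist_eq, sub_zero]
      set S : ℝ := ∑' i, Real.exp (-β * h i ^ 2) with hSdef
      have hSpos : 0 < S := hpos β hβ0
      -- upper bound on S
      have hup : S ≤ Real.exp (γ / β) * T := by
        have hle : ∀ i, Real.exp (-β * h i ^ 2) ≤ Real.exp (γ / β) * Real.exp (-γ * h i) := by
          intro i
          rw [← Real.exp_add]
          exact Real.exp_le_exp.2 (gibbs_key β γ (h i) hβ0 hγpos hγ1 (hnn i))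
        calc S ≤ ∑' i, Real.exp (γ / β) * Real.exp (-γ * h i) :=
              Summable.tsum_le_tsum hle (hS β hβ0) ((hsum γ hγpos).mul_left _)
          _ = Real.exp (γ / β) * T := tsum_mul_left
      have hlogup : Real.log S ≤ γ / β + Real.log T := by
        have := Real.log_le_log hSpos hup
        rwa [Real.log_mul (Real.exp_ne_zero _) (ne_of_gt hTpos), Real.log_exp] at this
      -- lower bound on S
      have hlow : Real.exp (-β * h 0 ^ 2) ≤ S :=
        Summable.le_tsum (hS β hβ0) 0 (fun j _ => (Real.exp_pos _).le)
      have hloglow : -β * h 0 ^ 2 ≤ Real.log S := by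
        have := Real.log_le_log (Real.exp_pos _) hlow
        rwa [Real.log_exp] at this
      -- combine
      have hub : β * Real.log S < ε := by
        have h1 : β * Real.log S ≤ β * (γ / β + Real.log T) :=
          mul_le_mul_of_nonneg_left hlogup hβ0.le
        have h2 : β * (γ / β + Real.log T) = γ + β * Real.log T := by
          field_simp
        have h3 : β * Real.log T ≤ β * L := by
          have : Real.log T ≤ L := le_abs_self _
          exact mul_le_mul_of_nonneg_left this hβ0.le
        have h4 : β * L < ε / 2 := by
          have h5 : β * (L + 1) < ε / 2 := by
            have := (lt_div_iff₀ (by positivity : (0:ℝ) < 2 * (L + 1))).1 hβ2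
            nlinarith
          nlinarith
        linarith
      have hlb : -ε < β * Real.log S := by
        have h1 : -(β * (h 0 ^ 2)) ≤ Real.log S := by nlinarith [hloglow]
        have h2 : β * (h 0 ^ 2 + 1) < ε :=
          (lt_div_iff₀ (by positivity : (0:ℝ) < (h 0) ^ 2 + 1)).1 hβ3
        have h3 : β * Real.log S ≥ β * (-(β * (h 0 ^ 2))) :=
          mul_le_mul_of_nonneg_left h1 hβ0.le
        nlinarith [sq_nonneg (h 0), hβ0.le]
      rw [abs_lt]
      exact ⟨hlb, hub⟩
  -- conclude
  have hcomp : Filter.Tendsto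
      (fun β : ℝ => Real.exp (β * Real.log (∑' i, Real.exp (-β * h i ^ 2))))
      (nhdsWithin 0 (Set.Ioi 0)) (nhds 1) := by
    have := (Real.continuous_exp.tendsto 0).comp hmain
    rwa [Real.exp_zero] at this
  refine hcomp.congr' ?_
  filter_upwards [self_mem_nhdsWithin] with β hβ
  rw [Real.rpow_def_of_pos (hpos β hβ), mul_comm]
end

section
/- Let $\{\lambda_i\}_{i=1}^\infty$ be a probability distribution with $\sum_{i=1}^\infty \lambda_i \ln^2 i < +\infty$. Then there exists a sequence $\{g_i\}_{i=1}^\infty$ of nonnegative reals such that $\sum_{i=1}^\infty \lambda_i g_i < +\infty$ and $\lim_{\beta\to 0^+}\left[\sum_{i=1}^\infty e^{-\beta g_i}\right]^\beta = 1$. -/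
open Filter Real

lemma exp_sq_log_bound {b : ℝ} (hb : 0 < b) (n : ℕ) :
    Real.exp (-(b * (Real.log (n + 1 : ℕ)) ^ 2)) ≤ Real.exp b⁻¹ * (((n : ℝ) + 1) ^ 2)⁻¹ := by
  set L := Real.log (n + 1 : ℕ) with hLdef
  have hL : Real.exp L = (n : ℝ) + 1 := by
    rw [hLdef, Real.exp_log (by push_cast; positivity)]; push_cast; ring
  have hsq : Real.sqrt b * Real.sqrt b⁻¹ = 1 := by
    rw [← Real.sqrt_mul hb.le, mul_inv_cancel₀ hb.ne', Real.sqrt_one]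
  have h1 : (Real.sqrt b) ^ 2 = b := Real.sq_sqrt hb.le
  have h2 : (Real.sqrt b⁻¹) ^ 2 = b⁻¹ := Real.sq_sqrt (inv_nonneg.2 hb.le)
  have h3 := sq_nonneg (Real.sqrt b * L - Real.sqrt b⁻¹)
  have h4 : (Real.sqrt b * L - Real.sqrt b⁻¹) ^ 2 = b * L ^ 2 - 2 * L + b⁻¹ := by
    have e : (Real.sqrt b * L - Real.sqrt b⁻¹) ^ 2
        = (Real.sqrt b) ^ 2 * L ^ 2 - 2 * (Real.sqrt b * Real.sqrt b⁻¹) * L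
          + (Real.sqrt b⁻¹) ^ 2 := by ring
    rw [e, h1, h2, hsq]; ring
  have key : -(b * L ^ 2) ≤ b⁻¹ - 2 * L := by rw [h4] at h3; linarith
  calc Real.exp (-(b * L ^ 2)) ≤ Real.exp (b⁻¹ - 2 * L) := Real.exp_le_exp.2 key
    _ = Real.exp b⁻¹ * (((n : ℝ) + 1) ^ 2)⁻¹ := by
        rw [Real.exp_sub, two_mul, Real.exp_add, hL, sq]
        ring

lemma summable_inv_sq_succ : Summable (fun n : ℕ => (((n : ℝ) + 1) ^ 2)⁻¹) := by
  have h2 : Summable (fun n : ℕ => ((n : ℝ) ^ 2)⁻¹) := by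
    simpa [one_div] using Real.summable_one_div_nat_pow.2 one_lt_two
  have := (summable_nat_add_iff 1).2 h2
  simpa using this


set_option maxHeartbeats 1000000 in
/-- Sufficient condition for the FA-property (Proposition 2 of the paper):
if `∑ λ i * (ln i)^2 < ∞` for a probability distribution `λ`, then there is a
nonnegative sequence `g` with `∑ λ i * g i < ∞` and
`(∑ exp (-β g i))^β → 1` as `β → 0⁺`. -/
theorem fa_property_of_summable_log_sq (lam : ℕ → ℝ) (hnn : ∀ i, 0 ≤ lam i)
    (hsum : HasSum lam 1)
    (h : Summable fun i => lam i * (Real.log (i + 1 : ℕ)) ^ 2) :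
    ∃ g : ℕ → ℝ, (∀ i, 0 ≤ g i) ∧ (Summable fun i => lam i * g i) ∧
      Filter.Tendsto (fun β : ℝ => (∑' i, Real.exp (-β * g i)) ^ β)
        (nhdsWithin 0 (Set.Ioi 0)) (nhds 1) := by
  set f : ℕ → ℝ := fun i => lam i * (Real.log (i + 1 : ℕ)) ^ 2 with hfdef
  have hf0 : ∀ i, 0 ≤ f i := fun i => mul_nonneg (hnn i) (sq_nonneg _)
  set R : ℕ → ℝ := fun n => ∑' i, f (i + n) with hRdef
  have hRsum : ∀ n, Summable fun i => f (i + n) := fun n => (summable_nat_add_iff n).2 h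
  have hRtend : Filter.Tendsto R atTop (nhds 0) := tendsto_sum_nat_add f
  have hRnn : ∀ n, 0 ≤ R n := fun n => tsum_nonneg fun i => hf0 _
  have hRrec : ∀ n, R n = f n + R (n + 1) := by
    intro n
    have := Summable.tsum_eq_zero_add (hRsum n)
    simp only [zero_add] at this
    rw [hRdef]
    simp only []
    rw [this]
    congr 1
    apply tsum_congr
    intro i
    congr 1
    omega
  set r : ℕ → ℝ := fun n => R n + (1/2 : ℝ) ^ n with hrdef
  have hrpos : ∀ n, 0 < r n := fun n => add_pos_of_nonneg_of_pos (hRnn n) (by positivity)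
  have hrtend : Filter.Tendsto r atTop (nhds 0) := by
    have h2 : Filter.Tendsto (fun n : ℕ => (1/2 : ℝ) ^ n) atTop (nhds 0) :=
      tendsto_pow_atTop_nhds_zero_of_lt_one (by norm_num) (by norm_num)
    have h3 := hRtend.add h2
    rw [add_zero] at h3
    exact h3
  have hfr : ∀ n, f n ≤ r n - r (n + 1) := by
    intro n
    have h1 := hRrec n
    have h2 : (1/2 : ℝ) ^ (n+1) ≤ (1/2 : ℝ) ^ n := by
      apply pow_le_pow_of_le_one (by norm_num) (by norm_num); omega
    simp only [hrdef]
    linarith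
  have hrmono : ∀ n, r (n + 1) ≤ r n := fun n => by have := hfr n; have := hf0 n; linarith
  set c : ℕ → ℝ := fun n => (Real.sqrt (r n))⁻¹ with hcdef
  have hc0 : ∀ n, 0 ≤ c n := fun n => inv_nonneg.2 (Real.sqrt_nonneg _)
  have hcpos : ∀ n, 0 < c n := fun n => inv_pos.2 (Real.sqrt_pos.2 (hrpos n))
  have hcTop : Filter.Tendsto c atTop atTop := by
    apply Filter.Tendsto.inv_tendsto_nhdsGT_zero
    apply tendsto_nhdsWithin_of_tendsto_nhds_of_eventually_within
    · have := (Real.continuous_sqrt.tendsto 0).comp hrtend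
      simpa [Function.comp_def] using this
    · exact Filter.Eventually.of_forall fun n => Real.sqrt_pos.2 (hrpos n)
  set g : ℕ → ℝ := fun n => c n * (Real.log (n + 1 : ℕ)) ^ 2 with hgdef
  have hg0 : ∀ i, 0 ≤ g i := fun i => mul_nonneg (hc0 i) (sq_nonneg _)
  -- summability of lam * g
  have hkey : ∀ n, f n * c n ≤ 2 * (Real.sqrt (r n) - Real.sqrt (r (n + 1))) := by
    intro n
    set a := Real.sqrt (r n)
    set b := Real.sqrt (r (n + 1))
    have ha : 0 < a := Real.sqrt_pos.2 (hrpos n)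
    have hb : 0 ≤ b := Real.sqrt_nonneg _
    have hba : b ≤ a := Real.sqrt_le_sqrt (hrmono n)
    have ha2 : a ^ 2 = r n := Real.sq_sqrt (hrpos n).le
    have hb2 : b ^ 2 = r (n + 1) := Real.sq_sqrt (hrpos _).le
    have h1 : f n ≤ a ^ 2 - b ^ 2 := by rw [ha2, hb2]; exact hfr n
    have hinv : a * a⁻¹ = 1 := mul_inv_cancel₀ ha.ne'
    have hcn : c n = a⁻¹ := rfl
    rw [hcn]
    have h2 : f n * a⁻¹ ≤ (a ^ 2 - b ^ 2) * a⁻¹ :=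
      mul_le_mul_of_nonneg_right h1 (inv_nonneg.2 ha.le)
    have h3 : (a ^ 2 - b ^ 2) * a⁻¹ ≤ 2 * (a - b) := by
      have e : (a ^ 2 - b ^ 2) * a⁻¹ = (a - b) * ((a + b) * a⁻¹) := by ring
      rw [e]
      have h4 : (a + b) * a⁻¹ ≤ 2 := by
        have h5 : (a + b) * a⁻¹ ≤ (2 * a) * a⁻¹ :=
          mul_le_mul_of_nonneg_right (by linarith) (inv_nonneg.2 ha.le)
        have h6 : (2 * a) * a⁻¹ = 2 := by rw [mul_assoc, hinv]; ring
        linarith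
      nlinarith
    linarith
  have htele : Summable (fun n => 2 * (Real.sqrt (r n) - Real.sqrt (r (n + 1)))) := by
    apply summable_of_sum_range_le (c := 2 * Real.sqrt (r 0))
    · intro n
      have := Real.sqrt_le_sqrt (hrmono n)
      linarith
    · intro n
      rw [← Finset.mul_sum, Finset.sum_range_sub']
      have := Real.sqrt_nonneg (r n)
      nlinarith [Real.sqrt_nonneg (r 0)]
  have hlg : Summable (fun i => lam i * g i) := by
    apply Summable.of_nonneg_of_le (fun i => mul_nonneg (hnn i) (hg0 i)) _ htele
    intro i
    have : lam i * g i = f i * c i := by rw [hfdef, hgdef]; ring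
    rw [this]
    exact hkey i
  refine ⟨g, hg0, hlg, ?_⟩
  set K : ℝ := ∑' n : ℕ, (((n : ℝ) + 1) ^ 2)⁻¹ with hKdef
  have hK1 : 1 ≤ K := by
    have := Summable.le_tsum summable_inv_sq_succ 0 (fun j _ => by positivity)
    simpa using this
  rw [Metric.tendsto_nhds]
  intro ε hε
  have hCt : Filter.Tendsto (fun C : ℝ => Real.exp C⁻¹) atTop (nhds 1) := by
    have := (Real.continuous_exp.tendsto 0).comp tendsto_inv_atTop_zero
    simpa [Function.comp_def] using this
  obtain ⟨C, hC1, hCexp⟩ : ∃ C : ℝ, 1 ≤ C ∧ Real.exp C⁻¹ < 1 + ε :=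
    ((eventually_ge_atTop (1 : ℝ)).and (hCt.eventually_lt_const (by linarith))).exists
  have hCpos : (0 : ℝ) < C := lt_of_lt_of_le one_pos hC1
  obtain ⟨N, hN⟩ : ∃ N : ℕ, ∀ i, N ≤ i → C ≤ c i :=
    eventually_atTop.1 (hcTop.eventually_ge_atTop C)
  set A : ℝ := (N : ℝ) + K with hAdef
  have hA1 : 1 ≤ A := by
    have : (0:ℝ) ≤ (N:ℝ) := Nat.cast_nonneg N
    simp only [hAdef]; linarith
  have hmain : ∀ β : ℝ, 0 < β →
      Summable (fun i => Real.exp (-β * g i)) ∧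
      (∑' i, Real.exp (-β * g i)) ≤ A * Real.exp ((C * β)⁻¹) := by
    intro β hβ
    have hbpos : 0 < C * β := mul_pos hCpos hβ
    have hbound : ∀ i : ℕ,
        Real.exp (-β * g (i + N)) ≤ Real.exp ((C * β)⁻¹) * (((i : ℝ) + 1) ^ 2)⁻¹ := by
      intro i
      have hL : (0:ℝ) ≤ (Real.log ((i + N) + 1 : ℕ)) ^ 2 := sq_nonneg _
      have hc := hN (i + N) (by omega)
      have s1 : Real.exp (-β * g (i + N))
          ≤ Real.exp (-((C * β) * (Real.log ((i + N) + 1 : ℕ)) ^ 2)) := by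
        apply Real.exp_le_exp.2
        simp only [hgdef]
        nlinarith [mul_nonneg (mul_nonneg (sub_nonneg.2 hc) hβ.le) hL]
      have s2 := exp_sq_log_bound hbpos (i + N)
      have s3 : ((((i + N : ℕ) : ℝ) + 1) ^ 2)⁻¹ ≤ (((i : ℝ) + 1) ^ 2)⁻¹ := by
        apply inv_anti₀ (by positivity)
        have : ((i : ℝ) + 1) ≤ (((i + N : ℕ) : ℝ) + 1) := by push_cast; linarith [Nat.cast_nonneg (α := ℝ) N]
        nlinarith [Nat.cast_nonneg (α := ℝ) i]
      calc Real.exp (-β * g (i + N))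
          ≤ Real.exp (-((C * β) * (Real.log ((i + N) + 1 : ℕ)) ^ 2)) := s1
        _ ≤ Real.exp (C * β)⁻¹ * ((((i + N : ℕ) : ℝ) + 1) ^ 2)⁻¹ := s2
        _ ≤ Real.exp ((C * β)⁻¹) * (((i : ℝ) + 1) ^ 2)⁻¹ :=
            mul_le_mul_of_nonneg_left s3 (Real.exp_pos _).le
    have hsummaj : Summable (fun i : ℕ => Real.exp ((C * β)⁻¹) * (((i : ℝ) + 1) ^ 2)⁻¹) :=
      summable_inv_sq_succ.mul_left _
    have hstail : Summable (fun i => Real.exp (-β * g (i + N))) :=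
      Summable.of_nonneg_of_le (fun i => (Real.exp_pos _).le) hbound hsummaj
    have hsumm : Summable (fun i => Real.exp (-β * g i)) := (summable_nat_add_iff N).1 hstail
    refine ⟨hsumm, ?_⟩
    have split := Summable.sum_add_tsum_nat_add N hsumm
    have hhead : ∑ i ∈ Finset.range N, Real.exp (-β * g i) ≤ (N : ℝ) := by
      calc ∑ i ∈ Finset.range N, Real.exp (-β * g i) ≤ ∑ _i ∈ Finset.range N, (1:ℝ) := by
            apply Finset.sum_le_sum
            intro i _
            apply Real.exp_le_one_iff.2
            have := mul_nonneg hβ.le (hg0 i)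
            linarith
        _ = (N : ℝ) := by simp
    have htail : (∑' i, Real.exp (-β * g (i + N))) ≤ Real.exp ((C * β)⁻¹) * K := by
      calc (∑' i, Real.exp (-β * g (i + N)))
          ≤ ∑' i : ℕ, Real.exp ((C * β)⁻¹) * (((i : ℝ) + 1) ^ 2)⁻¹ :=
            Summable.tsum_le_tsum hbound hstail hsummaj
        _ = Real.exp ((C * β)⁻¹) * K := by rw [tsum_mul_left]
    have hexp1 : 1 ≤ Real.exp ((C * β)⁻¹) := Real.one_le_exp (by positivity)
    rw [← split]
    have : (N : ℝ) + Real.exp ((C * β)⁻¹) * K ≤ A * Real.exp ((C * β)⁻¹) := by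
      simp only [hAdef]
      nlinarith [hexp1, hK1, Nat.cast_nonneg (α := ℝ) N]
    linarith
  have hup : ∀ᶠ β in nhdsWithin 0 (Set.Ioi 0),
      (∑' i, Real.exp (-β * g i)) ^ β < 1 + ε := by
    have ht : Filter.Tendsto (fun β : ℝ => Real.exp (Real.log A * β + C⁻¹))
        (nhdsWithin 0 (Set.Ioi 0)) (nhds (Real.exp C⁻¹)) := by
      have cont : Continuous fun β : ℝ => Real.exp (Real.log A * β + C⁻¹) :=
        Real.continuous_exp.comp ((continuous_const.mul continuous_id).add continuous_const)
      rw [show Real.exp C⁻¹ = Real.exp (Real.log A * 0 + C⁻¹) by norm_num]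
      exact (cont.tendsto 0).mono_left nhdsWithin_le_nhds
    filter_upwards [ht.eventually_lt_const hCexp, self_mem_nhdsWithin] with β h1 h2
    have hβ : (0:ℝ) < β := h2
    obtain ⟨hsumm, hbd⟩ := hmain β hβ
    have r1 : (∑' i, Real.exp (-β * g i)) ^ β ≤ (A * Real.exp ((C * β)⁻¹)) ^ β :=
      Real.rpow_le_rpow (tsum_nonneg fun i => (Real.exp_pos _).le) hbd hβ.le
    have r2 : (A * Real.exp ((C * β)⁻¹)) ^ β = Real.exp (Real.log A * β + C⁻¹) := by
      rw [Real.mul_rpow (by linarith) (Real.exp_pos _).le,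
        Real.rpow_def_of_pos (by linarith : (0:ℝ) < A),
        Real.rpow_def_of_pos (Real.exp_pos _), Real.log_exp, ← Real.exp_add]
      congr 1
      field_simp
    rw [r2] at r1
    linarith
  have hlo : ∀ᶠ β in nhdsWithin 0 (Set.Ioi 0),
      1 - ε < (∑' i, Real.exp (-β * g i)) ^ β := by
    have ht : Filter.Tendsto (fun β : ℝ => Real.exp (-β * g 0 * β))
        (nhdsWithin 0 (Set.Ioi 0)) (nhds 1) := by
      have cont : Continuous fun β : ℝ => Real.exp (-β * g 0 * β) :=
        Real.continuous_exp.comp ((continuous_id.neg.mul continuous_const).mul continuous_id)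
      rw [show (1:ℝ) = Real.exp (-(0:ℝ) * g 0 * 0) by norm_num]
      exact (cont.tendsto 0).mono_left nhdsWithin_le_nhds
    filter_upwards [ht.eventually_const_lt (by linarith : 1 - ε < 1), self_mem_nhdsWithin]
      with β h1 h2
    have hβ : (0:ℝ) < β := h2
    obtain ⟨hsumm, _⟩ := hmain β hβ
    have l1 : Real.exp (-β * g 0) ≤ ∑' i, Real.exp (-β * g i) :=
      Summable.le_tsum hsumm 0 fun j _ => (Real.exp_pos _).le
    have l2 : Real.exp (-β * g 0) ^ β ≤ (∑' i, Real.exp (-β * g i)) ^ β :=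
      Real.rpow_le_rpow (Real.exp_pos _).le l1 hβ.le
    have l3 : Real.exp (-β * g 0) ^ β = Real.exp (-β * g 0 * β) := by
      rw [Real.rpow_def_of_pos (Real.exp_pos _), Real.log_exp]
    rw [l3] at l2
    linarith
  filter_upwards [hup, hlo] with β h1 h2
  rw [Real.dist_eq, abs_sub_lt_iff]
  constructor <;> linarith
end

section
/- Let $\{g_i\}_{i=1}^\infty$ be a sequence of nonnegative reals with $\liminf_{i\to\infty} g_i/\ln^p i > 0$ for some $p > 2$. Then $\lim_{\beta\to 0^+}\left[\sum_{i=1}^\infty e^{-\beta g_i}\right]^\beta = 1$. -/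
open Real Filter

/-- Young-type inequality: `2t ≤ 2T + βc t^p` with `T = (2/(βc))^(1/(p-1))`. -/
private lemma young_aux {p : ℝ} (hp : 1 < p) {β c t : ℝ} (hβ : 0 < β) (hc : 0 < c)
    (ht : 0 ≤ t) : 2 * t ≤ 2 * (2 / (β * c)) ^ (1 / (p - 1)) + β * c * t ^ p := by
  have hbc : 0 < β * c := mul_pos hβ hc
  set T : ℝ := (2 / (β * c)) ^ (1 / (p - 1)) with hT
  have hTpos : 0 < T := rpow_pos_of_pos (by positivity) _
  rcases le_or_gt t T with h | h
  · have : 0 ≤ β * c * t ^ p := by positivity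
    nlinarith
  · have ht0 : 0 < t := hTpos.trans h
    have hp1 : 0 < p - 1 := by linarith
    have hTp : T ^ (p - 1) = 2 / (β * c) := by
      rw [hT, ← rpow_mul (by positivity), one_div, inv_mul_cancel₀ (ne_of_gt hp1), rpow_one]
    have h2 : 2 / (β * c) ≤ t ^ (p - 1) := by
      rw [← hTp]; exact rpow_le_rpow hTpos.le h.le hp1.le
    have h3 : 2 ≤ β * c * t ^ (p - 1) := by
      rw [div_le_iff₀ hbc] at h2; nlinarith
    have h4 : t ^ p = t ^ (p - 1) * t := by
      rw [← Real.rpow_add_one ht0.ne' (p - 1)]; norm_num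
    have h5 : 2 * t ≤ β * c * t ^ (p - 1) * t := mul_le_mul_of_nonneg_right h3 ht0.le
    rw [h4]; nlinarith

set_option maxHeartbeats 1000000 in
/-- If `liminf g i / (ln i)^p > 0` for some `p > 2`, then the sequence `g`
satisfies the strong Gibbs condition `(∑ exp (-β g i))^β → 1` as `β → 0⁺`. -/
theorem strong_gibbs_of_liminf_pos (g : ℕ → ℝ) (hnn : ∀ i, 0 ≤ g i) (p : ℝ)
    (hp : 2 < p)
    (hliminf : 0 < Filter.atTop.liminf fun i : ℕ => g i / (Real.log (i + 1 : ℕ)) ^ p) :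
    Filter.Tendsto (fun β : ℝ => (∑' i, Real.exp (-β * g i)) ^ β)
      (nhdsWithin 0 (Set.Ioi 0)) (nhds 1) := by
  set L := Filter.atTop.liminf fun i : ℕ => g i / (Real.log (i + 1 : ℕ)) ^ p with hL
  set c : ℝ := L / 2 with hcdef
  have hc : 0 < c := by positivity
  -- eventual lower bound on g
  have hev : ∀ᶠ i in atTop, c < g i / (Real.log (i + 1 : ℕ)) ^ p := by
    by_contra hcon
    rw [Filter.not_eventually] at hcon
    have hb : Filter.IsBoundedUnder (· ≥ ·) atTop
        (fun i : ℕ => g i / (Real.log (i + 1 : ℕ)) ^ p) :=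
      Filter.isBoundedUnder_of ⟨0, fun i => div_nonneg (hnn i) (by positivity)⟩
    have := Filter.liminf_le_of_frequently_le
      (hcon.mono fun i hi => not_lt.mp hi) hb
    rw [← hL] at this
    linarith
  obtain ⟨N, hN⟩ := eventually_atTop.mp hev
  have hgN : ∀ i, N ≤ i → c * (Real.log (i + 1 : ℕ)) ^ p ≤ g i := by
    intro i hi
    have h := hN i hi
    set tp := (Real.log (i + 1 : ℕ)) ^ p with htp
    have htp0 : 0 ≤ tp := by
      have : (0:ℝ) ≤ Real.log (i + 1 : ℕ) := by
        apply Real.log_nonneg; push_cast; linarith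
      positivity
    rcases htp0.eq_or_lt with h0 | h0
    · rw [← h0, mul_zero]; exact hnn i
    · rw [lt_div_iff₀ h0] at h; linarith
  set r : ℝ := 1 / (p - 1) with hrdef
  have hp1 : 1 < p := by linarith
  have hr0 : 0 < r := by rw [hrdef]; exact div_pos one_pos (by linarith)
  have hr1 : r < 1 := by
    rw [hrdef, div_lt_one (by linarith)]; linarith
  -- summable comparison series
  have hC : Summable (fun n : ℕ => ((n + 1 : ℕ) : ℝ) ^ (-2 : ℝ)) := by
    have h1 : Summable (fun n : ℕ => (n : ℝ) ^ (-2 : ℝ)) :=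
      Real.summable_nat_rpow.mpr (by norm_num)
    exact (summable_nat_add_iff 1).mpr h1
  set C : ℝ := ∑' n : ℕ, ((n + 1 : ℕ) : ℝ) ^ (-2 : ℝ) with hCdef
  have hC0 : 0 ≤ C := tsum_nonneg fun n => by positivity
  -- pointwise bound
  have key : ∀ β : ℝ, 0 < β → ∀ i : ℕ, N ≤ i →
      Real.exp (-β * g i) ≤
        Real.exp (2 * (2 / (β * c)) ^ r) * ((i + 1 : ℕ) : ℝ) ^ (-2 : ℝ) := by
    intro β hβ i hi
    set t : ℝ := Real.log (i + 1 : ℕ) with htdef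
    have ht : 0 ≤ t := by
      apply Real.log_nonneg; push_cast; linarith
    have hyoung := young_aux hp1 hβ hc ht
    have hg := hgN i hi
    have hpos : (0:ℝ) < ((i + 1 : ℕ) : ℝ) := by push_cast; linarith
    have hrpow : ((i + 1 : ℕ) : ℝ) ^ (-2 : ℝ) = Real.exp (t * (-2)) := by
      rw [Real.rpow_def_of_pos hpos, htdef]
    rw [hrpow, ← Real.exp_add, Real.exp_le_exp, hrdef]
    nlinarith [mul_le_mul_of_nonneg_left hg hβ.le]
  -- summability
  have hsumm : ∀ β : ℝ, 0 < β → Summable (fun i => Real.exp (-β * g i)) := by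
    intro β hβ
    rw [← summable_nat_add_iff N]
    apply Summable.of_nonneg_of_le (fun n => (Real.exp_pos _).le) ?_
      (hC.mul_left (Real.exp (2 * (2 / (β * c)) ^ r)))
    intro n
    calc Real.exp (-β * g (n + N))
        ≤ Real.exp (2 * (2 / (β * c)) ^ r) * ((n + N + 1 : ℕ) : ℝ) ^ (-2 : ℝ) :=
          key β hβ (n + N) (Nat.le_add_left N n)
      _ ≤ Real.exp (2 * (2 / (β * c)) ^ r) * ((n + 1 : ℕ) : ℝ) ^ (-2 : ℝ) := by
          apply mul_le_mul_of_nonneg_left _ (Real.exp_pos _).le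
          apply Real.rpow_le_rpow_of_nonpos (by positivity) (by push_cast; linarith)
            (by norm_num)
  set S : ℝ → ℝ := fun β => ∑' i, Real.exp (-β * g i) with hSdef
  set M : ℝ := (N : ℝ) + C + 1 with hMdef
  have hM1 : 1 ≤ M := by
    have h0 : (0:ℝ) ≤ (N : ℝ) := Nat.cast_nonneg N
    rw [hMdef]; linarith
  -- upper bound on log S
  have hST : ∀ β : ℝ, 0 < β →
      Real.log (S β) ≤ Real.log M + 2 * (2 / (β * c)) ^ r := by
    intro β hβ
    set T : ℝ := (2 / (β * c)) ^ r with hTdef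
    have hT0 : 0 ≤ T := Real.rpow_nonneg (by positivity) _
    have hsplit := Summable.sum_add_tsum_nat_add N (hsumm β hβ)
    have hhead : ∑ i ∈ Finset.range N, Real.exp (-β * g i) ≤ (N : ℝ) := by
      calc ∑ i ∈ Finset.range N, Real.exp (-β * g i)
          ≤ ∑ i ∈ Finset.range N, 1 := by
            apply Finset.sum_le_sum
            intro i _
            rw [Real.exp_le_one_iff]
            have := hnn i; nlinarith
        _ = (N : ℝ) := by simp
    have htail : (∑' n : ℕ, Real.exp (-β * g (n + N))) ≤ Real.exp (2 * T) * C := by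
      have hple : ∀ n : ℕ, Real.exp (-β * g (n + N)) ≤
          Real.exp (2 * T) * ((n + 1 : ℕ) : ℝ) ^ (-2 : ℝ) := by
        intro n
        calc Real.exp (-β * g (n + N))
            ≤ Real.exp (2 * T) * ((n + N + 1 : ℕ) : ℝ) ^ (-2 : ℝ) :=
              key β hβ (n + N) (Nat.le_add_left N n)
          _ ≤ Real.exp (2 * T) * ((n + 1 : ℕ) : ℝ) ^ (-2 : ℝ) := by
              apply mul_le_mul_of_nonneg_left _ (Real.exp_pos _).le
              apply Real.rpow_le_rpow_of_nonpos (by positivity) (by push_cast; linarith)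
                (by norm_num)
      calc (∑' n : ℕ, Real.exp (-β * g (n + N)))
          ≤ ∑' n : ℕ, Real.exp (2 * T) * ((n + 1 : ℕ) : ℝ) ^ (-2 : ℝ) :=
            Summable.tsum_le_tsum hple ((summable_nat_add_iff N).mpr (hsumm β hβ))
              (hC.mul_left _)
        _ = Real.exp (2 * T) * C := by rw [tsum_mul_left]
    have hSle : S β ≤ M * Real.exp (2 * T) := by
      have h1 : S β ≤ (N : ℝ) + Real.exp (2 * T) * C := by
        rw [hSdef]
        calc (∑' i, Real.exp (-β * g i))
            = (∑ i ∈ Finset.range N, Real.exp (-β * g i)) +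
              ∑' n : ℕ, Real.exp (-β * g (n + N)) := hsplit.symm
          _ ≤ (N : ℝ) + Real.exp (2 * T) * C := add_le_add hhead htail
      have he : 1 ≤ Real.exp (2 * T) := by
        rw [Real.one_le_exp_iff]; linarith
      have hN0 : (0:ℝ) ≤ (N : ℝ) := Nat.cast_nonneg N
      nlinarith
    calc Real.log (S β) ≤ Real.log (M * Real.exp (2 * T)) := by
          apply Real.log_le_log _ hSle
          have h0 : Real.exp (-β * g 0) ≤ S β :=
            Summable.le_tsum (hsumm β hβ) 0 fun i _ => (Real.exp_pos _).le
          exact lt_of_lt_of_le (Real.exp_pos _) h0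
      _ = Real.log M + 2 * T := by
          rw [Real.log_mul (by positivity) (Real.exp_pos _).ne', Real.log_exp]
  set K : ℝ := (2 / c) ^ r with hKdef
  have hβT : ∀ β : ℝ, 0 < β → β * (2 / (β * c)) ^ r = K * β ^ (1 - r) := by
    intro β hβ
    have h1 : (2 / (β * c)) = (2 / c) / β := by field_simp
    rw [h1, Real.div_rpow (by positivity) hβ.le, Real.rpow_sub hβ, Real.rpow_one, hKdef]
    ring
  have hupper : ∀ β : ℝ, 0 < β →
      β * Real.log (S β) ≤ β * Real.log M + 2 * K * β ^ (1 - r) := by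
    intro β hβ
    have h2 : β * Real.log (S β) ≤ β * (Real.log M + 2 * (2 / (β * c)) ^ r) :=
      mul_le_mul_of_nonneg_left (hST β hβ) hβ.le
    have h2' : β * Real.log (S β) ≤ β * Real.log M + 2 * (β * (2 / (β * c)) ^ r) := by
      nlinarith [h2]
    rw [hβT β hβ] at h2'
    linarith
  have hlower : ∀ β : ℝ, 0 < β → β * (-β * g 0) ≤ β * Real.log (S β) := by
    intro β hβ
    have h0 : Real.exp (-β * g 0) ≤ S β :=
      Summable.le_tsum (hsumm β hβ) 0 fun i _ => (Real.exp_pos _).le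
    have h1 := Real.log_le_log (Real.exp_pos _) h0
    rw [Real.log_exp] at h1
    exact mul_le_mul_of_nonneg_left h1 hβ.le
  have hU : Filter.Tendsto (fun β : ℝ => β * Real.log M + 2 * K * β ^ (1 - r))
      (nhdsWithin 0 (Set.Ioi 0)) (nhds 0) := by
    have h1 : Filter.Tendsto (fun β : ℝ => β * Real.log M) (nhds (0:ℝ)) (nhds 0) := by
      have h : Continuous fun β : ℝ => β * Real.log M := by fun_prop
      simpa using h.tendsto (0:ℝ)
    have h2 : Filter.Tendsto (fun β : ℝ => β ^ (1 - r)) (nhds (0:ℝ)) (nhds 0) := by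
      have hcont := Real.continuousAt_rpow_const 0 (1 - r) (Or.inr (by linarith))
      have h0 : (0:ℝ) ^ (1 - r) = 0 :=
        Real.zero_rpow (by linarith : (0:ℝ) < 1 - r).ne'
      simpa [h0] using hcont.tendsto
    have h3 := h1.add (h2.const_mul (2 * K))
    have h4 : Filter.Tendsto (fun β : ℝ => β * Real.log M + 2 * K * β ^ (1 - r))
        (nhds (0:ℝ)) (nhds 0) := by
      simpa [mul_comm, mul_assoc] using h3
    exact h4.mono_left nhdsWithin_le_nhds
  have hLo : Filter.Tendsto (fun β : ℝ => β * (-β * g 0))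
      (nhdsWithin 0 (Set.Ioi 0)) (nhds 0) := by
    have hco : Continuous fun β : ℝ => β * (-β * g 0) := by continuity
    have := hco.tendsto 0
    simp only [zero_mul, neg_zero, mul_zero] at this
    exact this.mono_left nhdsWithin_le_nhds
  have hmid : Filter.Tendsto (fun β : ℝ => β * Real.log (S β))
      (nhdsWithin 0 (Set.Ioi 0)) (nhds 0) :=
    tendsto_of_tendsto_of_tendsto_of_le_of_le' hLo hU
      (Filter.eventually_of_mem self_mem_nhdsWithin fun β hβ => hlower β hβ)
      (Filter.eventually_of_mem self_mem_nhdsWithin fun β hβ => hupper β hβ)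
  have hfinal : ∀ᶠ β in nhdsWithin (0:ℝ) (Set.Ioi 0),
      Real.exp (β * Real.log (S β)) = (S β) ^ β := by
    apply Filter.eventually_of_mem self_mem_nhdsWithin
    intro β hβ
    have hS0 : 0 < S β :=
      lt_of_lt_of_le (Real.exp_pos _) (Summable.le_tsum (hsumm β hβ) 0 fun i _ => (Real.exp_pos _).le)
    rw [Real.rpow_def_of_pos hS0, mul_comm]
  have hexp := (Real.continuous_exp.tendsto 0).comp hmid
  rw [Real.exp_zero] at hexp
  exact Filter.Tendsto.congr' hfinal hexp
end

section
/- Let $\{\lambda_i\}_{i=1}^\infty$ be a probability distribution arranged in nonincreasing order. Then $\sum_{i=1}^\infty \lambda_i \ln i < +\infty$ holds if and only if there exists a sequence $\{g_i\}$ of nonnegative reals with $\sum_i \lambda_i g_i < +\infty$ and $\sum_i e^{-\beta g_i} < +\infty$ for all $\beta > 0$. -/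
open Real Filter Finset Topology

private theorem fwd_dir (lam : ℕ → ℝ) (hnn : ∀ i, 0 ≤ lam i)
    (hf : Summable fun i => lam i * Real.log (i + 1 : ℕ)) :
    ∃ g : ℕ → ℝ, (∀ i, 0 ≤ g i) ∧ (Summable fun i => lam i * g i) ∧
      ∀ β : ℝ, 0 < β → Summable fun i => Real.exp (-β * g i) := by
  set f : ℕ → ℝ := fun i => lam i * Real.log (i + 1 : ℕ) with hfdef
  have hlog0 : ∀ i : ℕ, 0 ≤ Real.log ((i + 1 : ℕ) : ℝ) := fun i =>
    Real.log_nonneg (by exact_mod_cast Nat.one_le_iff_ne_zero.mpr (Nat.succ_ne_zero i))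
  have hf0 : ∀ i, 0 ≤ f i := fun i => mul_nonneg (hnn i) (hlog0 i)
  set T : ℕ → ℝ := fun m => ∑' k, f (k + m) with hTdef
  have hfm : ∀ m : ℕ, Summable fun j => f (j + m) := fun m => (summable_nat_add_iff m).mpr hf
  have hT0 : ∀ m, 0 ≤ T m := fun m => tsum_nonneg fun k => hf0 _
  have hT_anti : ∀ m d : ℕ, T (m + d) ≤ T m := by
    intro m d
    have key := Summable.sum_add_tsum_nat_add (f := fun j => f (j + m)) d (hfm m)
    have h2 : (∑' i, f (i + d + m)) = T (m + d) := by
      apply tsum_congr; intro k; congr 1; omega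
    have h3 : 0 ≤ ∑ i ∈ Finset.range d, f (i + m) := Finset.sum_nonneg fun i _ => hf0 _
    rw [h2] at key
    linarith [key]
  have hTtend : Tendsto T atTop (𝓝 0) := tendsto_sum_nat_add f
  have hM : ∀ k : ℕ, ∃ m : ℕ, T m ≤ (1/2 : ℝ) ^ k := by
    intro k
    have : ∀ᶠ m in atTop, T m < (1/2:ℝ)^k :=
      hTtend.eventually (gt_mem_nhds (by positivity))
    exact this.exists.imp fun m hm => hm.le
  choose M hMle using hM
  set N : ℕ → ℕ := fun k => Nat.rec 0 (fun k' nk => max (M (k' + 1)) (nk + 1)) k with hNdef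
  have hN0 : N 0 = 0 := rfl
  have hNsucc : ∀ k, N (k + 1) = max (M (k + 1)) (N k + 1) := fun k => rfl
  have hNstrict : StrictMono N := strictMono_nat_of_lt_succ fun k => by
    rw [hNsucc]; exact lt_of_lt_of_le (Nat.lt_succ_self _) (le_max_right _ _)
  have hNM : ∀ k, 1 ≤ k → M k ≤ N k := by
    intro k hk
    obtain ⟨k', rfl⟩ := Nat.exists_eq_add_of_le hk
    rw [show 1 + k' = k' + 1 by omega, hNsucc]; exact le_max_left _ _
  set c : ℕ → ℕ := fun i => Nat.findGreatest (fun k => N k ≤ i) i with hcdef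
  have hcN : ∀ i, N (c i) ≤ i := fun i =>
    Nat.findGreatest_spec (P := fun k => N k ≤ i) (Nat.zero_le i)
      (by simpa [hN0] using Nat.zero_le i)
  have hle : ∀ k i, N k ≤ i → k ≤ c i := fun k i h =>
    Nat.le_findGreatest (le_trans hNstrict.le_apply h) h
  have hci_le : ∀ i, c i ≤ i := fun i => Nat.findGreatest_le i
  have hkc : ∀ i k, k ≤ c i → N k ≤ i := fun i k h =>
    le_trans (hNstrict.monotone h) (hcN i)
  refine ⟨fun i => ((c i : ℝ) + 1) * Real.log (i + 1 : ℕ), fun i => ?_, ?_, ?_⟩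
  · exact mul_nonneg (by positivity) (hlog0 i)
  · -- summability of lam * g
    apply summable_of_sum_range_le (c := T 0 + 2)
      (fun i => mul_nonneg (hnn i) (mul_nonneg (by positivity) (hlog0 i)))
    intro n
    have step1 : ∀ i ∈ Finset.range n,
        lam i * (((c i : ℝ) + 1) * Real.log (i + 1 : ℕ)) =
          ∑ k ∈ Finset.range n, (if N k ≤ i then f i else 0) := by
      intro i hi
      have hset : (Finset.range n).filter (fun k => N k ≤ i) = Finset.range (c i + 1) := by
        ext k
        simp only [Finset.mem_filter, Finset.mem_range, Nat.lt_succ_iff]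
        constructor
        · rintro ⟨_, hk⟩; exact hle k i hk
        · intro hk
          exact ⟨lt_of_le_of_lt (le_trans hk (hci_le i)) (Finset.mem_range.mp hi), hkc i k hk⟩
      rw [← Finset.sum_filter, hset, Finset.sum_const, Finset.card_range, nsmul_eq_mul,
        hfdef]
      push_cast
      ring
    calc ∑ i ∈ Finset.range n, lam i * (((c i : ℝ) + 1) * Real.log (i + 1 : ℕ))
        = ∑ i ∈ Finset.range n, ∑ k ∈ Finset.range n, (if N k ≤ i then f i else 0) :=
          Finset.sum_congr rfl step1
      _ = ∑ k ∈ Finset.range n, ∑ i ∈ Finset.range n, (if N k ≤ i then f i else 0) :=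
          Finset.sum_comm
      _ ≤ ∑ k ∈ Finset.range n, T (N k) := by
          apply Finset.sum_le_sum
          intro k _
          rw [← Finset.sum_filter]
          set s := (Finset.range n).filter (fun i => N k ≤ i) with hs
          have himg : ∑ j ∈ s.image (· - N k), f (j + N k) = ∑ i ∈ s, f i := by
            rw [Finset.sum_image]
            · apply Finset.sum_congr rfl
              intro i hi
              have : N k ≤ i := (Finset.mem_filter.mp hi).2
              congr 1; omega
            · intro a ha b hb hab
              have ha' : N k ≤ a := (Finset.mem_filter.mp ha).2
              have hb' : N k ≤ b := (Finset.mem_filter.mp hb).2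
              simp only at hab
              omega
          rw [← himg]
          exact Summable.sum_le_tsum _ (fun j _ => hf0 _) (hfm (N k))
      _ ≤ ∑ k ∈ Finset.range n, ((if k = 0 then T 0 else 0) + (1/2:ℝ)^k) := by
          apply Finset.sum_le_sum
          intro k _
          by_cases hk : k = 0
          · subst hk
            rw [if_pos rfl, hN0, pow_zero]
            linarith [hT0 0]
          · have h1 : M k ≤ N k := hNM k (Nat.one_le_iff_ne_zero.mpr hk)
            have h2 : T (N k) ≤ T (M k) := by
              have := hT_anti (M k) (N k - M k)
              rwa [Nat.add_sub_cancel' h1] at this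
            simp only [if_neg hk, zero_add]
            exact h2.trans (hMle k)
      _ = (∑ k ∈ Finset.range n, (if k = 0 then T 0 else 0))
            + ∑ k ∈ Finset.range n, (1/2:ℝ)^k := Finset.sum_add_distrib
      _ ≤ T 0 + 2 := by
          have h1 : (∑ k ∈ Finset.range n, (if k = 0 then T 0 else 0)) ≤ T 0 := by
            rw [Finset.sum_ite_eq' (Finset.range n) 0 (fun _ => T 0)]
            split <;> simp [hT0 0]
          have h2 : ∑ k ∈ Finset.range n, (1/2:ℝ)^k ≤ 2 := by
            have := Summable.sum_le_tsum (Finset.range n) (fun k _ => by positivity : ∀ k ∉ Finset.range n, (0:ℝ) ≤ (1/2:ℝ)^k) summable_geometric_two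
            rwa [tsum_geometric_two] at this
          linarith
  · -- Gibbs condition
    intro β hβ
    set K : ℕ := ⌈2/β⌉₊ with hK
    have hKβ : 2 ≤ β * ((K : ℝ) + 1) := by
      have h1 : 2/β ≤ (K : ℝ) := Nat.le_ceil _
      have h2 : 2 = β * (2/β) := by field_simp
      nlinarith
    apply (summable_nat_add_iff (N K)).mp
    have hcomp : Summable fun i : ℕ => 1/((i:ℝ)+1)^2 := by
      have h := (summable_nat_add_iff 1).mpr (Real.summable_one_div_nat_pow.mpr one_lt_two)
      apply h.congr
      intro n
      push_cast
      ring
    apply Summable.of_nonneg_of_le (fun i => (Real.exp_pos _).le) (fun i => ?_) hcomp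
    set i' := i + N K with hi'
    have hci' : K ≤ c i' := hle K i' (by omega)
    have hx : (1:ℝ) ≤ ((i' + 1 : ℕ) : ℝ) := by exact_mod_cast Nat.one_le_iff_ne_zero.mpr (Nat.succ_ne_zero i')
    have hy : (0:ℝ) < (i:ℝ) + 1 := by positivity
    have hlogle : Real.log ((i:ℝ)+1) ≤ Real.log ((i' + 1 : ℕ) : ℝ) := by
      apply Real.log_le_log hy
      have hii : i ≤ i' + 1 := by omega
      have : (i:ℝ) ≤ ((i' + 1 : ℕ) : ℝ) := by exact_mod_cast hii
      have h1 : (1:ℝ) ≤ ((i' + 1 : ℕ) : ℝ) := hx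
      have hii2 : i + 1 ≤ i' + 1 := by omega
      calc (i:ℝ) + 1 = ((i + 1 : ℕ) : ℝ) := by push_cast; ring
        _ ≤ ((i' + 1 : ℕ) : ℝ) := by exact_mod_cast hii2
    have hlogx := hlog0 i'
    have hcK : β * ((K:ℝ) + 1) ≤ β * ((c i' : ℝ) + 1) := by
      have h : (K:ℝ) + 1 ≤ (c i' : ℝ) + 1 := by exact_mod_cast Nat.succ_le_succ hci'
      nlinarith
    set L : ℝ := Real.log ((i' + 1 : ℕ) : ℝ) with hLdef
    have h2L : 2 * Real.log ((i:ℝ) + 1) ≤ β * (((c i' : ℝ) + 1) * L) := by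
      have e1 : 2 * Real.log ((i:ℝ) + 1) ≤ 2 * L := by linarith
      have e2 : 2 * L ≤ (β * ((c i' : ℝ) + 1)) * L :=
        mul_le_mul_of_nonneg_right (le_trans hKβ hcK) hlogx
      have e3 : (β * ((c i' : ℝ) + 1)) * L = β * (((c i' : ℝ) + 1) * L) := by ring
      linarith
    have hstep : Real.exp (-β * (((c i' : ℝ) + 1) * L)) ≤
        Real.exp (-(2 * Real.log ((i:ℝ) + 1))) :=
      Real.exp_le_exp.mpr (by linarith)
    have hexp2 : Real.exp (-(2 * Real.log ((i:ℝ) + 1))) = 1 / ((i:ℝ) + 1) ^ 2 := by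
      rw [Real.exp_neg, two_mul, Real.exp_add, Real.exp_log hy, one_div, sq]
    exact le_of_le_of_eq hstep hexp2

private theorem conv_dir (lam : ℕ → ℝ) (hmono : Antitone lam)
    (hnn : ∀ i, 0 ≤ lam i) (hsum : HasSum lam 1)
    (g : ℕ → ℝ) (hg0 : ∀ i, 0 ≤ g i) (hg1 : Summable fun i => lam i * g i)
    (hg2 : ∀ β : ℝ, 0 < β → Summable fun i => Real.exp (-β * g i)) :
    Summable fun i => lam i * Real.log (i + 1 : ℕ) := by
  have hlam_le : ∀ i : ℕ, lam i * ((i : ℝ) + 1) ≤ 1 := by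
    intro i
    have h1 : ∑ j ∈ Finset.range (i + 1), lam i ≤ ∑ j ∈ Finset.range (i + 1), lam j :=
      Finset.sum_le_sum fun j hj => hmono (Nat.le_of_lt_succ (Finset.mem_range.mp hj))
    have h2 : ∑ j ∈ Finset.range (i + 1), lam j ≤ ∑' j, lam j :=
      Summable.sum_le_tsum _ (fun j _ => hnn j) hsum.summable
    rw [hsum.tsum_eq] at h2
    simp only [Finset.sum_const, Finset.card_range, nsmul_eq_mul] at h1
    push_cast at h1
    nlinarith
  have hmaj : Summable fun i => 2 * (lam i * g i) + 2 * Real.exp (-1 * g i) :=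
    (hg1.mul_left 2).add ((hg2 1 one_pos).mul_left 2)
  refine Summable.of_nonneg_of_le (fun i => ?_) (fun i => ?_) hmaj
  · exact mul_nonneg (hnn i) (Real.log_nonneg (by push_cast; linarith [Nat.cast_nonneg (α := ℝ) i]))
  · set x : ℝ := (i : ℝ) + 1 with hxdef
    have hx1 : 1 ≤ x := by simp only [hxdef, le_add_iff_nonneg_left]; positivity
    have hcast : ((i + 1 : ℕ) : ℝ) = x := by push_cast [hxdef]; ring
    rw [hcast]
    set L : ℝ := Real.log x with hL
    have hL0 : 0 ≤ L := Real.log_nonneg hx1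
    have hexp : 0 ≤ Real.exp (-1 * g i) := (Real.exp_pos _).le
    by_cases hc : L ≤ 2 * g i
    · have : lam i * L ≤ lam i * (2 * g i) := mul_le_mul_of_nonneg_left hc (hnn i)
      nlinarith
    · push_neg at hc
      -- lam i * L ≤ L / x ≤ 2 * exp (-g i)
      have hs : 0 < Real.sqrt x := Real.sqrt_pos.mpr (by linarith)
      have hsx : Real.sqrt x * Real.sqrt x = x := Real.mul_self_sqrt (by linarith)
      have hlog : L ≤ 2 * Real.sqrt x := by
        have h1 : Real.log (Real.sqrt x) ≤ Real.sqrt x - 1 := Real.log_le_sub_one_of_pos hs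
        have h2 : Real.log (Real.sqrt x) = L / 2 := Real.log_sqrt (by linarith)
        linarith
      have hlamx : lam i ≤ 1 / x := by
        have := hlam_le i
        rw [← hxdef] at this
        rw [le_div_iff₀ (by linarith)]; linarith
      have h3 : lam i * L ≤ L / x := by
        rw [div_eq_mul_one_div L x, mul_comm L (1/x)]
        exact mul_le_mul_of_nonneg_right hlamx hL0
      have h4 : Real.exp (-(L/2)) ≤ Real.exp (-1 * g i) := by
        apply Real.exp_le_exp.mpr; linarith
      have h5 : Real.exp (-(L/2)) = 1 / Real.sqrt x := by
        have : L / 2 = Real.log (Real.sqrt x) := (Real.log_sqrt (by linarith)).symm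
        rw [this, Real.exp_neg, Real.exp_log hs, one_div]
      have h6 : L / x ≤ 2 * (1 / Real.sqrt x) := by
        rw [div_le_iff₀ (by linarith : (0:ℝ) < x)]
        have : 2 * (1 / Real.sqrt x) * x = 2 * Real.sqrt x := by
          field_simp; nlinarith
        rw [this]; exact hlog
      have h7 : lam i * g i ≥ 0 := mul_nonneg (hnn i) (hg0 i)
      nlinarith [h4, h5, h6, h3]

/-- Sequence version of (ii) ⟺ (iii) in Proposition 1: for a nonincreasing
probability distribution `λ`, `∑ λ i * ln i < ∞` holds iff there is a
nonnegative sequence `g` with `∑ λ i * g i < ∞` and `∑ exp (-β g i) < ∞`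
for all `β > 0`. -/
theorem summable_log_iff_exists_gibbs (lam : ℕ → ℝ) (hmono : Antitone lam)
    (hnn : ∀ i, 0 ≤ lam i) (hsum : HasSum lam 1) :
    (Summable fun i => lam i * Real.log (i + 1 : ℕ)) ↔
      ∃ g : ℕ → ℝ, (∀ i, 0 ≤ g i) ∧ (Summable fun i => lam i * g i) ∧
        ∀ β : ℝ, 0 < β → Summable fun i => Real.exp (-β * g i) := by
  constructor
  · exact fwd_dir lam hnn
  · rintro ⟨g, hg0, hg1, hg2⟩
    exact conv_dir lam hmono hnn hsum g hg0 hg1 hg2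
end
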